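/- Suppose there exists a symmetric matrix X ∈ ℝ^{n×n} such that the KYP matrix W(X) is positive semidefinite. Then the system is positive real: for every ω ∈ ℝ such that iωI_n − A is invertible, the complex matrix Φ(iω) = G(iω) + G(iω)* is Hermitian positive semidefinite, where G(iω)* denotes the conjugate transpose. (Here one uses that, since A, B, C, D are real, G(−iω)ᵀ = G(iω)*.) -/

import Mathlib

/-!
Complexify `W(X)` and evaluate its quadratic form at `(x, u)` with `x = (iωI - A)⁻¹ B u`.
Since `A x = iω x - B u` and `iω + conj (iω) = 0`, every term containing `X` cancels, and
what remains is `u* C x + (C x)* u + u* (D + Dᵀ) u = u* (G(iω) + G(iω)*) u`, which is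
therefore nonnegative.
-/

open Matrix ComplexOrder

/-- The transfer function `G(s) = C (sI - A)⁻¹ B + D`, with real matrices cast to `ℂ`. -/
noncomputable def transferFun {n m p : ℕ} (A : Matrix (Fin n) (Fin n) ℝ)
    (B : Matrix (Fin n) (Fin m) ℝ) (C : Matrix (Fin p) (Fin n) ℝ)
    (D : Matrix (Fin p) (Fin m) ℝ) (s : ℂ) : Matrix (Fin p) (Fin m) ℂ :=
  C.map Complex.ofReal * (s • 1 - A.map Complex.ofReal)⁻¹ * B.map Complex.ofReal +
    D.map Complex.ofReal

/-- The KYP matrix `W(X)`. -/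
def KYP {n m : ℕ} (A : Matrix (Fin n) (Fin n) ℝ) (B : Matrix (Fin n) (Fin m) ℝ)
    (C : Matrix (Fin m) (Fin n) ℝ) (D : Matrix (Fin m) (Fin m) ℝ)
    (X : Matrix (Fin n) (Fin n) ℝ) : Matrix (Fin n ⊕ Fin m) (Fin n ⊕ Fin m) ℝ :=
  Matrix.fromBlocks (-(Aᵀ * X) - X * A) (Cᵀ - X * B) (C - Bᵀ * X) (D + Dᵀ)

namespace Matrix

variable {ι κ R : Type*}

lemma conjTranspose_map_ofReal (M : Matrix ι κ ℝ) :
    (M.map Complex.ofReal)ᴴ = Mᵀ.map Complex.ofReal := by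
  ext i j; simp

lemma map_ofReal_mul {μ : Type*} [Fintype κ] (P : Matrix ι κ ℝ) (Q : Matrix κ μ ℝ) :
    (P * Q).map Complex.ofReal = P.map Complex.ofReal * Q.map Complex.ofReal :=
  Matrix.map_mul (f := Complex.ofRealHom)

lemma PosSemidef.map_ofReal [Fintype ι] [DecidableEq ι] {W : Matrix ι ι ℝ}
    (hW : W.PosSemidef) : (W.map Complex.ofReal).PosSemidef := by
  obtain ⟨S, rfl⟩ : ∃ S : Matrix ι ι ℝ, W = Sᵀ * S := by
    open scoped MatrixOrder in
    exact ⟨CFC.sqrt W, by rw [← conjTranspose_eq_transpose_of_trivial,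
      (CFC.sqrt_nonneg W).posSemidef.1.eq, CFC.sqrt_mul_sqrt_self W hW.nonneg]⟩
  rw [map_ofReal_mul, ← conjTranspose_map_ofReal]
  exact posSemidef_conjTranspose_mul_self _

variable [Fintype ι] [Fintype κ]

lemma posSemidef_add_conjTranspose_iff [Ring R] [PartialOrder R] [StarRing R]
    {M : Matrix ι ι R} :
    (M + Mᴴ).PosSemidef ↔ ∀ u, 0 ≤ star u ⬝ᵥ (M *ᵥ u) + star (M *ᵥ u) ⬝ᵥ u := by
  simp only [posSemidef_iff_dotProduct_mulVec, isHermitian_add_transpose_self, true_and, add_mulVec, dotProduct_add,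
    dotProduct_mulVec, star_mulVec]

lemma star_dotProduct_conjTranspose_mulVec [CommSemiring R] [StarRing R] (M : Matrix ι κ R)
    (v : κ → R) (w : ι → R) : star v ⬝ᵥ (Mᴴ *ᵥ w) = star (M *ᵥ v) ⬝ᵥ w := by
  rw [star_mulVec, dotProduct_mulVec]

lemma mulVec_inv_smul_one_sub_mulVec [CommRing R] [DecidableEq ι] {A : Matrix ι ι R} {s : R}
    (h : IsUnit (s • 1 - A)) (v : ι → R) :
    A *ᵥ ((s • 1 - A)⁻¹ *ᵥ v) = s • ((s • 1 - A)⁻¹ *ᵥ v) - v := by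
  have hv : (s • 1 - A) *ᵥ ((s • 1 - A)⁻¹ *ᵥ v) = v := by
    rw [mulVec_mulVec, mul_nonsing_inv _ ((isUnit_iff_isUnit_det _).mp h), one_mulVec]
  rw [sub_mulVec, smul_mulVec, one_mulVec] at hv
  generalize (s • 1 - A)⁻¹ *ᵥ v = x at hv ⊢
  rw [← hv, sub_sub_cancel]

lemma star_sumElim_dotProduct_kyp_mulVec_sumElim [CommRing R] [StarRing R]
    (A X : Matrix ι ι R) (B : Matrix ι κ R) (C : Matrix κ ι R) (D : Matrix κ κ R)
    {s : R} (hs : star s = -s) {x : ι → R} {u : κ → R} (hx : A *ᵥ x = s • x - B *ᵥ u) :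
    star (Sum.elim x u) ⬝ᵥ
        (fromBlocks (-(Aᴴ * X) - X * A) (Cᴴ - X * B) (C - Bᴴ * X) (D + Dᴴ) *ᵥ Sum.elim x u) =
      star u ⬝ᵥ (C *ᵥ x + D *ᵥ u) + star (C *ᵥ x + D *ᵥ u) ⬝ᵥ u := by
  rw [Function.star_sumElim, fromBlocks_mulVec, sumElim_dotProduct_sumElim]
  simp only [sub_mulVec, add_mulVec, neg_mulVec, ← mulVec_mulVec, dotProduct_add,
    dotProduct_sub, dotProduct_neg, Sum.elim_comp_inl, Sum.elim_comp_inr,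
    star_dotProduct_conjTranspose_mulVec, hx, star_sub, star_add, star_smul, sub_dotProduct,
    smul_dotProduct, add_dotProduct, smul_eq_mul, hs, mulVec_sub, mulVec_smul, dotProduct_smul]
  ring

end Matrix

section KYP

variable {n m : ℕ} (A : Matrix (Fin n) (Fin n) ℝ) (B : Matrix (Fin n) (Fin m) ℝ)
  (C : Matrix (Fin m) (Fin n) ℝ) (D : Matrix (Fin m) (Fin m) ℝ)

lemma KYP_map_ofReal (X : Matrix (Fin n) (Fin n) ℝ) :
    (KYP A B C D X).map Complex.ofReal =
      fromBlocks (-((A.map Complex.ofReal)ᴴ * X.map Complex.ofReal) -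
          X.map Complex.ofReal * A.map Complex.ofReal)
        ((C.map Complex.ofReal)ᴴ - X.map Complex.ofReal * B.map Complex.ofReal)
        (C.map Complex.ofReal - (B.map Complex.ofReal)ᴴ * X.map Complex.ofReal)
        (D.map Complex.ofReal + (D.map Complex.ofReal)ᴴ) := by
  simp only [KYP, fromBlocks_map, conjTranspose_map_ofReal, map_ofReal_mul,
    Matrix.map_sub _ Complex.ofReal_sub, Matrix.map_add _ Complex.ofReal_add,
    Matrix.map_neg _ Complex.ofReal_neg]

lemma transferFun_mulVec (s : ℂ) (u : Fin m → ℂ) :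
    transferFun A B C D s *ᵥ u =
      C.map Complex.ofReal *ᵥ ((s • 1 - A.map Complex.ofReal)⁻¹ *ᵥ (B.map Complex.ofReal *ᵥ u)) +
        D.map Complex.ofReal *ᵥ u := by
  rw [transferFun, add_mulVec, mulVec_mulVec, mulVec_mulVec, Matrix.mul_assoc]

end KYP

/-- A solvable KYP inequality implies positive realness: `Φ(iω) = G(iω) + G(iω)*` is
Hermitian positive semidefinite whenever `iω I - A` is invertible. -/
theorem KYP_implies_positive_real {n m : ℕ} (A : Matrix (Fin n) (Fin n) ℝ)
    (B : Matrix (Fin n) (Fin m) ℝ) (C : Matrix (Fin m) (Fin n) ℝ)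
    (D : Matrix (Fin m) (Fin m) ℝ)
    (hX : ∃ X : Matrix (Fin n) (Fin n) ℝ, Xᵀ = X ∧ (KYP A B C D X).PosSemidef) :
    ∀ ω : ℝ, IsUnit ((Complex.I * ω) • 1 - A.map Complex.ofReal) →
      (transferFun A B C D (Complex.I * ω) +
        (transferFun A B C D (Complex.I * ω))ᴴ).PosSemidef := by
  obtain ⟨X, -, hW⟩ := hX
  intro ω hω
  rw [posSemidef_add_conjTranspose_iff]
  intro u
  have hs : star (Complex.I * ω) = -(Complex.I * ω) := by simp
  have hform := hW.map_ofReal.dotProduct_mulVec_nonneg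
    (Sum.elim (((Complex.I * ω) • 1 - A.map Complex.ofReal)⁻¹ *ᵥ (B.map Complex.ofReal *ᵥ u)) u)
  rwa [KYP_map_ofReal, star_sumElim_dotProduct_kyp_mulVec_sumElim _ _ _ _ _ hs
    (mulVec_inv_smul_one_sub_mulVec hω _), ← transferFun_mulVec] at hform
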